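/- Let T ≥ 1, λ = 1/(2√T), V = 1, and suppose for each t ∈ [T], Q(t) ≥ 0 and R(t) ≥ -t/2 satisfy exp(λ Q(t)) - 1 + V·R(t) ≤ λ exp(λ Q(t))·√t + V·√t. Then Q(t) ≤ (1/λ) · ln((1 + 2Vt)/(1 - λ√t)) for all t ∈ [T]. -/
import Mathlib


theorem ccv_bound_exp (T : ℕ) (hT : 1 ≤ T) (lam V : ℝ)
    (hlam : lam = 1 / (2 * Real.sqrt T)) (hV : V = 1)
    (Q R : ℕ → ℝ) (hQ : ∀ t ∈ Finset.Icc 1 T, 0 ≤ Q t)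
    (hR : ∀ t ∈ Finset.Icc 1 T, R t ≥ -(t : ℝ) / 2)
    (h : ∀ t ∈ Finset.Icc 1 T,
      Real.exp (lam * Q t) - 1 + V * R t
        ≤ lam * Real.exp (lam * Q t) * Real.sqrt t + V * Real.sqrt t) :
    ∀ t ∈ Finset.Icc 1 T,
      Q t ≤ (1 / lam) * Real.log ((1 + 2 * V * t) / (1 - lam * Real.sqrt t)) := by
  intro t ht
  obtain ⟨ht1, htT⟩ := Finset.mem_Icc.mp ht
  have hT0 : (0:ℝ) < Real.sqrt T :=
    Real.sqrt_pos.2 (by exact_mod_cast Nat.lt_of_lt_of_le Nat.zero_lt_one hT)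
  have hlam0 : 0 < lam := by rw [hlam]; positivity
  have hst : Real.sqrt t ≤ Real.sqrt T := Real.sqrt_le_sqrt (by exact_mod_cast htT)
  have hst0 : 0 ≤ Real.sqrt t := Real.sqrt_nonneg _
  have ht1' : (1:ℝ) ≤ t := by exact_mod_cast ht1
  have hden : (1:ℝ)/2 ≤ 1 - lam * Real.sqrt t := by
    rw [hlam]
    have : 1 / (2 * Real.sqrt T) * Real.sqrt t ≤ 1/2 := by
      rw [div_mul_eq_mul_div, one_mul, div_le_div_iff₀ (by positivity) (by norm_num)]
      nlinarith
    linarith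
  have hden0 : 0 < 1 - lam * Real.sqrt t := by linarith
  have hsqt : Real.sqrt t ≤ t := by nlinarith [Real.sq_sqrt (le_trans zero_le_one ht1'), Real.sqrt_nonneg (t:ℝ), Real.one_le_sqrt.mpr ht1']
  have h1 := h t ht
  have h2 := hR t ht
  have hexp : Real.exp (lam * Q t) * (1 - lam * Real.sqrt t) ≤ 1 + 2 * V * t := by
    rw [hV] at h1 ⊢
    nlinarith
  have hnum0 : 0 < 1 + 2 * V * t := by rw [hV]; nlinarith
  have hle : Real.exp (lam * Q t) ≤ (1 + 2 * V * t) / (1 - lam * Real.sqrt t) := by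
    rw [le_div_iff₀ hden0]; exact hexp
  have hlog : lam * Q t ≤ Real.log ((1 + 2 * V * t) / (1 - lam * Real.sqrt t)) := by
    have := Real.log_le_log (Real.exp_pos _) hle
    rwa [Real.log_exp] at this
  calc Q t = (1 / lam) * (lam * Q t) := by field_simp
    _ ≤ _ := by
        apply mul_le_mul_of_nonneg_left hlog
        positivity
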